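/- arXiv:2309.14632 — 2 statements merged into one kernel-verified Lean document; each statement's English description precedes it below -/
import Mathlib

section
/- If X is a Hausdorff space, then |X| ≤ πχ(X)^(c(X)·dψ_c(X)·wψ_c(X)). -/
open Cardinal Set TopologicalSpace

universe u

/-- The density of a space: the least cardinality of a dense subset. -/
noncomputable def dens (X : Type u) [TopologicalSpace X] : Cardinal.{u} :=
  sInf {c : Cardinal.{u} | ∃ D : Set X, Dense D ∧ #D = c}

/-- A local π-base at a point: a family of nonempty open sets such that every
open set containing the point contains a member of the family. -/
def IsLocalPiBase (X : Type u) [TopologicalSpace X] (x : X) (𝒱 : Set (Set X)) : Prop :=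
  (∀ V ∈ 𝒱, IsOpen V ∧ V.Nonempty) ∧
    ∀ U : Set X, IsOpen U → x ∈ U → ∃ V ∈ 𝒱, V ⊆ U

/-- The π-character at a point: the least infinite cardinality of a local π-base. -/
noncomputable def piCharPoint (X : Type u) [TopologicalSpace X] (x : X) : Cardinal.{u} :=
  sInf {κ : Cardinal.{u} | ℵ₀ ≤ κ ∧ ∃ 𝒱 : Set (Set X), IsLocalPiBase X x 𝒱 ∧ #𝒱 ≤ κ}

/-- The π-character of a space. -/
noncomputable def piChar (X : Type u) [TopologicalSpace X] : Cardinal.{u} :=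
  ⨆ x : X, piCharPoint X x

/-- A π-base for a space. -/
def IsPiBase (X : Type u) [TopologicalSpace X] (𝒱 : Set (Set X)) : Prop :=
  (∀ V ∈ 𝒱, IsOpen V ∧ V.Nonempty) ∧
    ∀ U : Set X, IsOpen U → U.Nonempty → ∃ V ∈ 𝒱, V ⊆ U

/-- The π-weight of a space: the least infinite cardinality of a π-base. -/
noncomputable def piWeight (X : Type u) [TopologicalSpace X] : Cardinal.{u} :=
  sInf {κ : Cardinal.{u} | ℵ₀ ≤ κ ∧ ∃ 𝒱 : Set (Set X), IsPiBase X 𝒱 ∧ #𝒱 ≤ κ}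

/-- The cellularity of a space: the least infinite cardinal bounding the size of
every pairwise disjoint family of nonempty open sets. -/
noncomputable def cellularity (X : Type u) [TopologicalSpace X] : Cardinal.{u} :=
  sInf {κ : Cardinal.{u} | ℵ₀ ≤ κ ∧ ∀ 𝒞 : Set (Set X),
    (∀ U ∈ 𝒞, IsOpen U ∧ U.Nonempty) → 𝒞.PairwiseDisjoint id → #𝒞 ≤ κ}

/-- The set of infinite cardinals κ witnessing the nonquasiregularity degree:
every nonempty open set U contains a nonempty set ⋂₀ 𝒱 with 𝒱 an open family of
size at most κ and ⋂_{V ∈ 𝒱} cl V ⊆ U. -/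
def nqSet (X : Type u) [TopologicalSpace X] : Set Cardinal.{u} :=
  {κ : Cardinal.{u} | ℵ₀ ≤ κ ∧ ∀ U : Set X, IsOpen U → U.Nonempty →
    ∃ 𝒱 : Set (Set X), (∀ V ∈ 𝒱, IsOpen V) ∧ #𝒱 ≤ κ ∧
      (⋂₀ 𝒱).Nonempty ∧ (⋂ V ∈ 𝒱, closure V) ⊆ U}

/-- A space is an nq-space if its nonquasiregularity degree is defined. -/
def IsNqSpace (X : Type u) [TopologicalSpace X] : Prop :=
  (nqSet X).Nonempty

/-- The nonquasiregularity degree of a space. -/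
noncomputable def nq (X : Type u) [TopologicalSpace X] : Cardinal.{u} :=
  sInf (nqSet X)

/-- The closed pseudocharacter at a point. -/
noncomputable def psiCPoint (X : Type u) [TopologicalSpace X] (x : X) : Cardinal.{u} :=
  sInf {κ : Cardinal.{u} | ℵ₀ ≤ κ ∧ ∃ 𝒱 : Set (Set X),
    (∀ V ∈ 𝒱, IsOpen V ∧ x ∈ V) ∧ #𝒱 ≤ κ ∧ (⋂ V ∈ 𝒱, closure V) = {x}}

/-- The closed pseudocharacter of a space. -/
noncomputable def psiC (X : Type u) [TopologicalSpace X] : Cardinal.{u} :=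
  sInf {κ : Cardinal.{u} | ℵ₀ ≤ κ ∧ ∀ x : X, ∃ 𝒱 : Set (Set X),
    (∀ V ∈ 𝒱, IsOpen V ∧ x ∈ V) ∧ #𝒱 ≤ κ ∧ (⋂ V ∈ 𝒱, closure V) = {x}}

/-- The dense closed pseudocharacter of a space. -/
noncomputable def dPsiC (X : Type u) [TopologicalSpace X] : Cardinal.{u} :=
  sInf {κ : Cardinal.{u} | ℵ₀ ≤ κ ∧ ∃ D : Set X, Dense D ∧ ∀ d ∈ D, psiCPoint X d ≤ κ}

/-- The weak closed pseudocharacter at a point: the least infinite cardinality of a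
family 𝒱 of open sets with ⋂_{V ∈ 𝒱} cl V = {x}. -/
noncomputable def wPsiCPoint (X : Type u) [TopologicalSpace X] (x : X) : Cardinal.{u} :=
  sInf {κ : Cardinal.{u} | ℵ₀ ≤ κ ∧ ∃ 𝒱 : Set (Set X),
    (∀ V ∈ 𝒱, IsOpen V) ∧ #𝒱 ≤ κ ∧ (⋂ V ∈ 𝒱, closure V) = {x}}

/-- The weak closed pseudocharacter of a space. -/
noncomputable def wPsiC (X : Type u) [TopologicalSpace X] : Cardinal.{u} :=
  ⨆ x : X, wPsiCPoint X x

/-- The pseudocharacter of a space: the least infinite cardinal κ such that every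
point is the intersection of at most κ open sets. -/
noncomputable def psi (X : Type u) [TopologicalSpace X] : Cardinal.{u} :=
  sInf {κ : Cardinal.{u} | ℵ₀ ≤ κ ∧ ∀ x : X, ∃ 𝒱 : Set (Set X),
    (∀ V ∈ 𝒱, IsOpen V) ∧ #𝒱 ≤ κ ∧ ⋂₀ 𝒱 = {x}}

/-- The Lindelöf degree of a space. -/
noncomputable def lindelofDegree (X : Type u) [TopologicalSpace X] : Cardinal.{u} :=
  sInf {κ : Cardinal.{u} | ℵ₀ ≤ κ ∧ ∀ 𝒰 : Set (Set X), (∀ U ∈ 𝒰, IsOpen U) →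
    ⋃₀ 𝒰 = Set.univ → ∃ 𝒱 ⊆ 𝒰, #𝒱 ≤ κ ∧ ⋃₀ 𝒱 = Set.univ}

/-- The cardinality of the collection of regular open subsets of a space. -/
noncomputable def cardRO (X : Type u) [TopologicalSpace X] : Cardinal.{u} :=
  #{R : Set X | R = interior (closure R)}

/-- A space is quasiregular if every nonempty open set contains a nonempty open
set whose closure is contained in it. -/
def Quasiregular (X : Type u) [TopologicalSpace X] : Prop :=
  ∀ U : Set X, IsOpen U → U.Nonempty →
    ∃ V : Set X, IsOpen V ∧ V.Nonempty ∧ closure V ⊆ U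

/-!
Fix local π-bases of size at most `μ = πχ(X)` and put `κ = c(X)·dψ_c(X)·wψ_c(X)`. By the
cellularity bound, the union of any family of open sets lies in the closure of the union of at
most `κ` of its members. A closing-off argument of length `κ⁺` produces a set `A` with
`|A| ≤ μ^κ` such that, whenever at most `κ` closures of unions of at most `κ` π-base members
at points of `A` fail to cover `X`, some point of `A` lies outside all of them. Testing this at a
point `d` of a dense set where `ψ_c(d, X) ≤ κ`, using the sets of the π-base avoiding each member
of a closed pseudobase at `d`, shows that `A` is dense. So the local π-bases at points of `A`
form a π-base of size at most `μ^κ`, every regular closed set is the closure of the union of at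
most `κ` of its members, and there are at most `μ^κ` regular closed sets. Finally a weak closed
pseudobase of size at most `κ` at each point embeds `X` into the `κ`-subsets of the regular
closed sets, whence `|X| ≤ (μ^κ)^κ = μ^κ`.
-/

namespace Cardinal

theorem mk_bounded_subset_le_of_pow_eq {α : Type u} {s : Set α} {κ ν : Cardinal.{u}}
    (hs : #s ≤ ν) (hν : ℵ₀ ≤ ν) (hνκ : ν ^ κ = ν) : #{t | t ⊆ s ∧ #t ≤ κ} ≤ ν :=
  (mk_bounded_subset_le s κ).trans (hνκ ▸ power_le_power_right (max_le hs hν))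

theorem exists_forall_lt_of_mk_lt {c : Cardinal.{u}} (hc : c.IsRegular) {s : Set c.ord.ToType}
    (hs : #s < c) : ∃ i, ∀ j ∈ s, j < i :=
  not_isCofinal_iff.1 fun h => (Order.cof_le h).not_gt (by rwa [Ordinal.cof_toType, hc.cof_ord])

theorem lt_of_power_eq_self {κ ν : Cardinal.{u}} (hν : ℵ₀ ≤ ν) (hνκ : ν ^ κ = ν) : κ < ν :=
  (cantor κ).trans_le (hνκ ▸ power_le_power_right (natCast_le_aleph0.trans hν))

theorem exists_subset_mk_le_subset_biUnion {α β : Type u} {B : α → Set β} {A : Set α}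
    {s : Set β} (hs : s ⊆ ⋃ x ∈ A, B x) : ∃ C ⊆ A, #C ≤ #s ∧ s ⊆ ⋃ x ∈ C, B x := by
  choose f hfA hf using fun b : s => mem_iUnion₂.1 (hs b.2)
  exact ⟨range f, range_subset_iff.2 hfA, mk_range_le,
    fun b hb => mem_biUnion (mem_range_self ⟨b, hb⟩) (hf ⟨b, hb⟩)⟩

theorem exists_mk_le_closed_under {α : Type u} {κ ν : Cardinal.{u}} (hκ : ℵ₀ ≤ κ)
    (hν : ℵ₀ ≤ ν) (hνκ : ν ^ κ = ν) (G : Set α → Set α)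
    (hG : ∀ C : Set α, #C ≤ κ → #(G C) ≤ ν) :
    ∃ A : Set α, #A ≤ ν ∧ ∀ C ⊆ A, #C ≤ κ → G C ⊆ A := by
  let step : Set α → Set α := fun A => A ∪ ⋃ C ∈ {C | C ⊆ A ∧ #C ≤ κ}, G C
  have mk_step : ∀ A : Set α, #A ≤ ν → #(step A) ≤ ν := fun A hA =>
    (mk_union_le _ _).trans <| add_le_of_le hν hA <| (mk_biUnion_le _ _).trans <|
      mul_le_of_le hν (mk_bounded_subset_le_of_pow_eq hA hν hνκ) (ciSup_le' fun C => hG C C.2.2)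
  have hκν : Order.succ κ ≤ ν := Order.succ_le_of_lt (lt_of_power_eq_self hν hνκ)
  let chain : (Order.succ κ).ord.ToType → Set α :=
    wellFounded_lt.fix fun i ih => step (⋃ j : Iio i, ih j j.2)
  have chain_eq : ∀ i, chain i = step (⋃ j : Iio i, chain j) := fun i =>
    wellFounded_lt.fix_eq _ i
  have mk_chain : ∀ i, #(chain i) ≤ ν := fun i => by
    refine wellFounded_lt.induction (C := fun i => #(chain i) ≤ ν) i fun i ih => ?_
    rw [chain_eq]
    refine mk_step _ ((mk_iUnion_le _).trans (mul_le_of_le hν ?_ (ciSup_le' fun j => ih j j.2)))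
    exact (Order.lt_succ_iff.1 (by simpa using mk_Iio_lt i)).trans ((Order.le_succ κ).trans hκν)
  refine ⟨⋃ i, chain i, (mk_iUnion_le _).trans (mul_le_of_le hν ?_ (ciSup_le' mk_chain)), ?_⟩
  · rwa [mk_toType, card_ord]
  intro C hC hCκ
  choose idx hidx using fun c : C => mem_iUnion.1 (hC c.2)
  obtain ⟨i₀, hi₀⟩ := exists_forall_lt_of_mk_lt (isRegular_succ hκ)
    (mk_range_le.trans_lt (hCκ.trans_lt (Order.lt_succ κ)) : #(range idx) < _)
  have hC_below : C ⊆ ⋃ j : Iio i₀, chain j := fun c hc =>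
    mem_iUnion.2 ⟨⟨idx ⟨c, hc⟩, hi₀ _ (mem_range_self _)⟩, hidx ⟨c, hc⟩⟩
  have hC_small : C ∈ {C' : Set α | C' ⊆ ⋃ j : Iio i₀, chain j ∧ #C' ≤ κ} := ⟨hC_below, hCκ⟩
  calc G C ⊆ step (⋃ j : Iio i₀, chain j) :=
        subset_union_of_subset_right (subset_biUnion_of_mem (u := G) hC_small) _
    _ = chain i₀ := (chain_eq i₀).symm
    _ ⊆ ⋃ i, chain i := subset_iUnion chain i₀

end Cardinal

section Topology

variable {X : Type u} [TopologicalSpace X]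

theorem biInter_closure_open_nhds [T2Space X] (x : X) :
    ⋂ V ∈ {V : Set X | IsOpen V ∧ x ∈ V}, closure V = {x} := by
  refine subset_antisymm (fun y hy => ?_)
    (singleton_subset_iff.2 (mem_iInter₂.2 fun V hV => subset_closure hV.2))
  by_contra hyx
  obtain ⟨u, v, hu, hv, hyu, hxv, huv⟩ := t2_separation hyx
  exact disjoint_left.1 (huv.symm.closure_left hu) (mem_iInter₂.1 hy v ⟨hv, hxv⟩) hyu

theorem piCharPoint_spec (x : X) :
    ℵ₀ ≤ piCharPoint X x ∧ ∃ 𝒱, IsLocalPiBase X x 𝒱 ∧ #𝒱 ≤ piCharPoint X x :=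
  csInf_mem (s := {κ | ℵ₀ ≤ κ ∧ ∃ 𝒱, IsLocalPiBase X x 𝒱 ∧ #𝒱 ≤ κ})
    ⟨max ℵ₀ #(Set X), le_max_left _ _, {V | IsOpen V ∧ V.Nonempty},
      ⟨fun _ hV => hV, fun U hU hxU => ⟨U, ⟨hU, x, hxU⟩, subset_rfl⟩⟩,
      (mk_set_le _).trans (le_max_right _ _)⟩

theorem piCharPoint_le_piChar (x : X) : piCharPoint X x ≤ piChar X :=
  le_ciSup bddAbove_of_small x

theorem cellularity_spec :
    ℵ₀ ≤ cellularity X ∧ ∀ 𝒞 : Set (Set X), (∀ U ∈ 𝒞, IsOpen U ∧ U.Nonempty) →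
      𝒞.PairwiseDisjoint id → #𝒞 ≤ cellularity X :=
  csInf_mem (s := {κ | ℵ₀ ≤ κ ∧ ∀ 𝒞 : Set (Set X), (∀ U ∈ 𝒞, IsOpen U ∧ U.Nonempty) →
      𝒞.PairwiseDisjoint id → #𝒞 ≤ κ})
    ⟨max ℵ₀ #(Set X), le_max_left _ _, fun 𝒞 _ _ => (mk_set_le 𝒞).trans (le_max_right _ _)⟩

theorem psiCPoint_spec [T2Space X] (x : X) :
    ℵ₀ ≤ psiCPoint X x ∧ ∃ 𝒱 : Set (Set X), (∀ V ∈ 𝒱, IsOpen V ∧ x ∈ V) ∧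
      #𝒱 ≤ psiCPoint X x ∧ ⋂ V ∈ 𝒱, closure V = {x} :=
  csInf_mem (s := {κ | ℵ₀ ≤ κ ∧ ∃ 𝒱 : Set (Set X), (∀ V ∈ 𝒱, IsOpen V ∧ x ∈ V) ∧ #𝒱 ≤ κ ∧
      ⋂ V ∈ 𝒱, closure V = {x}})
    ⟨max ℵ₀ #(Set X), le_max_left _ _, {V | IsOpen V ∧ x ∈ V}, fun _ hV => hV,
      (mk_set_le _).trans (le_max_right _ _), biInter_closure_open_nhds x⟩

theorem dPsiC_spec : ℵ₀ ≤ dPsiC X ∧ ∃ D : Set X, Dense D ∧ ∀ d ∈ D, psiCPoint X d ≤ dPsiC X :=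
  csInf_mem (s := {κ | ℵ₀ ≤ κ ∧ ∃ D : Set X, Dense D ∧ ∀ d ∈ D, psiCPoint X d ≤ κ})
    ⟨max ℵ₀ (⨆ x, psiCPoint X x), le_max_left _ _, univ, dense_univ,
      fun d _ => (le_ciSup bddAbove_of_small d).trans (le_max_right _ _)⟩

theorem wPsiCPoint_spec [T2Space X] (x : X) :
    ℵ₀ ≤ wPsiCPoint X x ∧ ∃ 𝒱 : Set (Set X), (∀ V ∈ 𝒱, IsOpen V) ∧
      #𝒱 ≤ wPsiCPoint X x ∧ ⋂ V ∈ 𝒱, closure V = {x} :=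
  csInf_mem (s := {κ | ℵ₀ ≤ κ ∧ ∃ 𝒱 : Set (Set X), (∀ V ∈ 𝒱, IsOpen V) ∧ #𝒱 ≤ κ ∧
      ⋂ V ∈ 𝒱, closure V = {x}})
    ⟨max ℵ₀ #(Set X), le_max_left _ _, {V | IsOpen V ∧ x ∈ V}, fun _ hV => hV.1,
      (mk_set_le _).trans (le_max_right _ _), biInter_closure_open_nhds x⟩

theorem wPsiCPoint_le_wPsiC (x : X) : wPsiCPoint X x ≤ wPsiC X :=
  le_ciSup bddAbove_of_small x

theorem IsPiBase.isLocalPiBase {ℬ : Set (Set X)} (hℬ : IsPiBase X ℬ) (x : X) :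
    IsLocalPiBase X x ℬ :=
  ⟨hℬ.1, fun U hU hxU => hℬ.2 U hU ⟨x, hxU⟩⟩

theorem IsLocalPiBase.mem_closure_sUnion {x : X} {ℬ : Set (Set X)} (hℬ : IsLocalPiBase X x ℬ)
    {O : Set X} (hO : IsOpen O) (hxO : x ∈ O) : x ∈ closure (⋃₀ {P ∈ ℬ | P ⊆ O}) := by
  refine mem_closure_iff.2 fun G hG hxG => ?_
  obtain ⟨P, hPℬ, hPGO⟩ := hℬ.2 (G ∩ O) (hG.inter hO) ⟨hxG, hxO⟩
  obtain ⟨p, hp⟩ := (hℬ.1 P hPℬ).2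
  exact ⟨p, (hPGO hp).1, P, ⟨hPℬ, hPGO.trans inter_subset_right⟩, hp⟩

theorem isPiBase_biUnion_of_dense {B : X → Set (Set X)} (hB : ∀ x, IsLocalPiBase X x (B x))
    {A : Set X} (hA : Dense A) : IsPiBase X (⋃ x ∈ A, B x) := by
  refine ⟨fun P hP => ?_, fun U hU hUne => ?_⟩
  · obtain ⟨x, -, hPx⟩ := mem_iUnion₂.1 hP
    exact (hB x).1 P hPx
  · obtain ⟨x, hxA, hxU⟩ := hA.exists_mem_open hU hUne
    obtain ⟨P, hPx, hPU⟩ := (hB x).2 U hU hxU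
    exact ⟨P, mem_biUnion hxA hPx, hPU⟩

/-- The subfamily is read off a maximal disjoint family of nonempty open sets, each inside a
member of `𝒰`. -/
theorem exists_subset_mk_le_subset_closure_sUnion {κ : Cardinal.{u}}
    (hcell : ∀ 𝒞 : Set (Set X), (∀ U ∈ 𝒞, IsOpen U ∧ U.Nonempty) → 𝒞.PairwiseDisjoint id →
      #𝒞 ≤ κ)
    {𝒰 : Set (Set X)} (h𝒰 : ∀ U ∈ 𝒰, IsOpen U) :
    ∃ 𝒲 ⊆ 𝒰, #𝒲 ≤ κ ∧ ⋃₀ 𝒰 ⊆ closure (⋃₀ 𝒲) := by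
  let S : Set (Set (Set X)) := {𝒞 | (∀ C ∈ 𝒞, IsOpen C ∧ C.Nonempty ∧ ∃ U ∈ 𝒰, C ⊆ U) ∧
    𝒞.PairwiseDisjoint id}
  obtain ⟨𝒞, h𝒞max⟩ : ∃ 𝒞, Maximal (· ∈ S) 𝒞 := zorn_subset S fun c hcS hc =>
    ⟨⋃₀ c, ⟨fun C ⟨s, hs, hC⟩ => (hcS hs).1 C hC,
      (hc.pairwiseDisjoint_sUnion id).2 fun s hs => (hcS hs).2⟩, fun _ => subset_sUnion_of_mem⟩
  obtain ⟨h𝒞, h𝒞disj⟩ := h𝒞max.prop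
  choose f hf𝒰 hf using fun C : 𝒞 => (h𝒞 C C.2).2.2
  refine ⟨range f, range_subset_iff.2 hf𝒰,
    mk_range_le.trans (hcell 𝒞 (fun C hC => ⟨(h𝒞 C hC).1, (h𝒞 C hC).2.1⟩) h𝒞disj), ?_⟩
  rintro x ⟨U, hU, hxU⟩
  by_contra hx
  let O := U \ closure (⋃₀ range f)
  have hO_disj : ∀ C ∈ 𝒞, Disjoint O C := fun C hC => disjoint_left.2 fun y hyO hyC =>
    hyO.2 (subset_closure ⟨f ⟨C, hC⟩, mem_range_self _, hf _ hyC⟩)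
  have hO_mem : insert O 𝒞 ∈ S :=
    ⟨forall_mem_insert.2
        ⟨⟨(h𝒰 U hU).sdiff isClosed_closure, ⟨x, hxU, hx⟩, U, hU, sdiff_subset⟩, h𝒞⟩,
      h𝒞disj.insert fun C hC _ => hO_disj C hC⟩
  exact disjoint_left.1 (hO_disj O (h𝒞max.mem_of_prop_insert hO_mem)) ⟨hxU, hx⟩ ⟨hxU, hx⟩

theorem aleph0_le_piChar [Nonempty X] : ℵ₀ ≤ piChar X :=
  (piCharPoint_spec (Classical.arbitrary X)).1.trans (piCharPoint_le_piChar _)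

theorem exists_isLocalPiBase_mk_le_piChar (x : X) :
    ∃ ℬ, IsLocalPiBase X x ℬ ∧ #ℬ ≤ piChar X :=
  let ⟨_, ℬ, hℬ, hℬx⟩ := piCharPoint_spec x
  ⟨ℬ, hℬ, hℬx.trans (piCharPoint_le_piChar x)⟩

theorem exists_dense_forall_closedPseudobase_mk_le_dPsiC [T2Space X] :
    ∃ D : Set X, Dense D ∧ ∀ d ∈ D, ∃ 𝒱 : Set (Set X), (∀ V ∈ 𝒱, IsOpen V ∧ d ∈ V) ∧
      #𝒱 ≤ dPsiC X ∧ ⋂ V ∈ 𝒱, closure V = {d} :=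
  let ⟨_, D, hD, hDψ⟩ := dPsiC_spec (X := X)
  ⟨D, hD, fun d hd =>
    let ⟨_, 𝒱, h𝒱, h𝒱κ, h𝒱d⟩ := psiCPoint_spec d
    ⟨𝒱, h𝒱, h𝒱κ.trans (hDψ d hd), h𝒱d⟩⟩

theorem aleph0_le_wPsiC [T2Space X] [Nonempty X] : ℵ₀ ≤ wPsiC X :=
  (wPsiCPoint_spec (Classical.arbitrary X)).1.trans (wPsiCPoint_le_wPsiC _)

theorem exists_weakClosedPseudobase_mk_le_wPsiC [T2Space X] (x : X) :
    ∃ 𝒱 : Set (Set X), (∀ V ∈ 𝒱, IsOpen V) ∧ #𝒱 ≤ wPsiC X ∧ ⋂ V ∈ 𝒱, closure V = {x} :=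
  let ⟨_, 𝒱, h𝒱, h𝒱κ, h𝒱x⟩ := wPsiCPoint_spec x
  ⟨𝒱, h𝒱, h𝒱κ.trans (wPsiCPoint_le_wPsiC x), h𝒱x⟩

theorem mem_closure_sUnion_disjoint_of_notMem_closure {B : X → Set (Set X)}
    (hB : ∀ x, IsLocalPiBase X x (B x)) {A : Set X} {x : X} (hxA : x ∈ A) {V : Set X}
    (hxV : x ∉ closure V) : x ∈ closure (⋃₀ {P ∈ ⋃ y ∈ A, B y | Disjoint P V}) := by
  have hsub : {P ∈ B x | P ⊆ (closure V)ᶜ} ⊆ {P ∈ ⋃ y ∈ A, B y | Disjoint P V} := fun P hP =>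
    ⟨mem_biUnion hxA hP.1, (subset_compl_iff_disjoint_right.1 hP.2).mono_right subset_closure⟩
  exact closure_mono (sUnion_mono hsub)
    ((hB x).mem_closure_sUnion isClosed_closure.isOpen_compl hxV)

variable {κ ν : Cardinal.{u}}

theorem exists_dense_mk_le [Nonempty X] (hκ : ℵ₀ ≤ κ) (hν : ℵ₀ ≤ ν) (hνκ : ν ^ κ = ν)
    {B : X → Set (Set X)} (hB : ∀ x, IsLocalPiBase X x (B x)) (hBν : ∀ x, #(B x) ≤ ν)
    (hcell : ∀ 𝒞 : Set (Set X), (∀ U ∈ 𝒞, IsOpen U ∧ U.Nonempty) → 𝒞.PairwiseDisjoint id →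
      #𝒞 ≤ κ)
    {D : Set X} (hD : Dense D)
    (hψ : ∀ d ∈ D, ∃ 𝒱 : Set (Set X), (∀ V ∈ 𝒱, IsOpen V ∧ d ∈ V) ∧ #𝒱 ≤ κ ∧
      ⋂ V ∈ 𝒱, closure V = {d}) :
    ∃ A : Set X, Dense A ∧ #A ≤ ν := by
  let fams : Set X → Set (Set (Set (Set X))) := fun C =>
    {𝒮 | 𝒮 ⊆ {𝒲 | 𝒲 ⊆ ⋃ x ∈ C, B x ∧ #𝒲 ≤ κ} ∧ #𝒮 ≤ κ}
  let avoid : Set (Set (Set X)) → X := fun 𝒮 =>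
    Classical.epsilon fun p => p ∉ ⋃ 𝒲 ∈ 𝒮, closure (⋃₀ 𝒲)
  have mk_fams : ∀ C : Set X, #C ≤ κ → #(fams C) ≤ ν := fun C hC =>
    have mk_pool : #(⋃ x ∈ C, B x) ≤ ν := (mk_biUnion_le _ _).trans <|
      mul_le_of_le hν (hC.trans (lt_of_power_eq_self hν hνκ).le) (ciSup_le' fun x => hBν x)
    mk_bounded_subset_le_of_pow_eq (mk_bounded_subset_le_of_pow_eq mk_pool hν hνκ) hν hνκ
  obtain ⟨A, hAν, hA⟩ := exists_mk_le_closed_under hκ hν hνκ (fun C => avoid '' fams C)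
    fun C hC => mk_image_le.trans (mk_fams C hC)
  refine ⟨A, dense_iff_inter_open.2 fun U hU hUne => ?_, hAν⟩
  by_contra hUA
  obtain ⟨d, hdD, hdU⟩ := hD.exists_mem_open hU hUne
  obtain ⟨𝒱, h𝒱, h𝒱κ, h𝒱d⟩ := hψ d hdD
  choose 𝒲 h𝒲 h𝒲κ h𝒲V using fun V : 𝒱 =>
    exists_subset_mk_le_subset_closure_sUnion hcell (𝒰 := {P ∈ ⋃ x ∈ A, B x | Disjoint P V})
      fun P hP => let ⟨x, _, hPx⟩ := mem_iUnion₂.1 hP.1; ((hB x).1 P hPx).1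
  let F := ⋃ 𝒲' ∈ range 𝒲, closure (⋃₀ 𝒲')
  have hAF : A ⊆ F := fun x hxA => by
    obtain ⟨V, hV, hxV⟩ : ∃ V ∈ 𝒱, x ∉ closure V := by
      by_contra! h
      have hxd : x ∈ ({d} : Set X) := h𝒱d ▸ mem_iInter₂.2 h
      exact hUA ⟨d, hdU, hxd ▸ hxA⟩
    exact mem_biUnion (mem_range_self ⟨V, hV⟩) (closure_minimal (h𝒲V ⟨V, hV⟩) isClosed_closure
      (mem_closure_sUnion_disjoint_of_notMem_closure hB hxA hxV))
  have hdF : d ∉ F := by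
    simp only [F, mem_iUnion₂, exists_prop, exists_range_iff, not_exists]
    intro V hd
    refine disjoint_left.1 (Disjoint.closure_right ?_ (h𝒱 V V.2).1) (h𝒱 V V.2).2 hd
    exact disjoint_sUnion_right.2 fun P hP => (h𝒲 V hP).2.symm
  obtain ⟨C, hCA, hCκ, hC⟩ := exists_subset_mk_le_subset_biUnion (B := B) (s := ⋃ V, 𝒲 V)
    (iUnion_subset fun V P hP => (h𝒲 V hP).1)
  have h𝒮 : range 𝒲 ∈ fams C :=
    ⟨forall_mem_range.2 fun V => ⟨(subset_iUnion 𝒲 V).trans hC, h𝒲κ V⟩, mk_range_le.trans h𝒱κ⟩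
  have mk_iUnion : #(⋃ V, 𝒲 V) ≤ κ :=
    (mk_iUnion_le _).trans (mul_le_of_le hκ h𝒱κ (ciSup_le' h𝒲κ))
  exact Classical.epsilon_spec (p := fun p => p ∉ F) ⟨d, hdF⟩
    (hAF (hA C hCA (hCκ.trans mk_iUnion) ⟨_, h𝒮, rfl⟩))

theorem mk_closure_image_isOpen_le (hν : ℵ₀ ≤ ν) (hνκ : ν ^ κ = ν) {ℬ : Set (Set X)}
    (hℬ : IsPiBase X ℬ) (hℬν : #ℬ ≤ ν)
    (hcell : ∀ 𝒞 : Set (Set X), (∀ U ∈ 𝒞, IsOpen U ∧ U.Nonempty) → 𝒞.PairwiseDisjoint id →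
      #𝒞 ≤ κ) :
    #(closure '' {W : Set X | IsOpen W}) ≤ ν := by
  have hsub : closure '' {W : Set X | IsOpen W} ⊆
      (fun 𝒲 => closure (⋃₀ 𝒲)) '' {𝒲 | 𝒲 ⊆ ℬ ∧ #𝒲 ≤ κ} := by
    rintro _ ⟨W, hW, rfl⟩
    obtain ⟨𝒲, h𝒲, h𝒲κ, hW𝒲⟩ := exists_subset_mk_le_subset_closure_sUnion hcell
      (𝒰 := {P ∈ ℬ | P ⊆ W}) fun P hP => (hℬ.1 P hP.1).1
    refine ⟨𝒲, ⟨h𝒲.trans (sep_subset _ _), h𝒲κ⟩, subset_antisymm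
      (closure_mono (sUnion_subset fun P hP => (h𝒲 hP).2)) (closure_minimal ?_ isClosed_closure)⟩
    exact fun w hw => closure_minimal hW𝒲 isClosed_closure
      ((hℬ.isLocalPiBase w).mem_closure_sUnion hW hw)
  exact (mk_le_mk_of_subset hsub).trans
    (mk_image_le.trans (mk_bounded_subset_le_of_pow_eq hℬν hν hνκ))

/-- A point is determined by the closures of the members of a weak closed pseudobase at it. -/
theorem mk_le_of_mk_closure_image_isOpen_le (hν : ℵ₀ ≤ ν) (hνκ : ν ^ κ = ν)
    (hRC : #(closure '' {W : Set X | IsOpen W}) ≤ ν)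
    (hw : ∀ x, ∃ 𝒱 : Set (Set X), (∀ V ∈ 𝒱, IsOpen V) ∧ #𝒱 ≤ κ ∧ ⋂ V ∈ 𝒱, closure V = {x}) :
    #X ≤ ν := by
  choose 𝒱 h𝒱 h𝒱κ h𝒱x using hw
  have hinj : Function.Injective fun x => closure '' 𝒱 x := fun x y hxy => by
    simpa only [sInter_image, h𝒱x, singleton_eq_singleton_iff] using congrArg sInter hxy
  calc #X ≤ #{t | t ⊆ closure '' {W : Set X | IsOpen W} ∧ #t ≤ κ} :=
        mk_le_of_injective (f := fun x => ⟨closure '' 𝒱 x, image_mono (h𝒱 x),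
          mk_image_le.trans (h𝒱κ x)⟩) fun x y h => hinj (congrArg Subtype.val h)
    _ ≤ ν := mk_bounded_subset_le_of_pow_eq hRC hν hνκ

end Topology

/-- If `X` is Hausdorff then `|X| ≤ πχ(X)^(c(X)·dψ_c(X)·wψ_c(X))`. -/
theorem stmt_13 (X : Type u) [TopologicalSpace X] [T2Space X] :
    #X ≤ piChar X ^ (cellularity X * dPsiC X * wPsiC X) := by
  rcases isEmpty_or_nonempty X with hX | hX
  · simp
  obtain ⟨hc, hcell⟩ := cellularity_spec (X := X)
  have hκ_eq : cellularity X * dPsiC X * wPsiC X =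
      max (max (cellularity X) (dPsiC X)) (wPsiC X) := by
    rw [mul_eq_max hc dPsiC_spec.1, mul_eq_max (le_max_of_le_left hc) aleph0_le_wPsiC]
  set κ := cellularity X * dPsiC X * wPsiC X
  have hcκ : cellularity X ≤ κ := hκ_eq ▸ le_max_of_le_left (le_max_left _ _)
  have hdκ : dPsiC X ≤ κ := hκ_eq ▸ le_max_of_le_left (le_max_right _ _)
  have hwκ : wPsiC X ≤ κ := hκ_eq ▸ le_max_right _ _
  have hκ : ℵ₀ ≤ κ := hc.trans hcκ
  set ν := piChar X ^ κ
  have hνκ : ν ^ κ = ν := by rw [← power_mul, mul_eq_self hκ]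
  have hμν : piChar X ≤ ν := self_le_power _ (one_le_aleph0.trans hκ)
  have hν : ℵ₀ ≤ ν := aleph0_le_piChar.trans hμν
  have hcell' := fun 𝒞 h𝒞 hdisj => (hcell 𝒞 h𝒞 hdisj).trans hcκ
  choose B hB hBμ using exists_isLocalPiBase_mk_le_piChar (X := X)
  obtain ⟨D, hD, hDψ⟩ := exists_dense_forall_closedPseudobase_mk_le_dPsiC (X := X)
  obtain ⟨A, hA, hAν⟩ := exists_dense_mk_le hκ hν hνκ hB (fun x => (hBμ x).trans hμν) hcell' hD
    fun d hdD => let ⟨𝒱, h𝒱, h𝒱κ, h𝒱d⟩ := hDψ d hdD; ⟨𝒱, h𝒱, h𝒱κ.trans hdκ, h𝒱d⟩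
  have mk_pool : #(⋃ x ∈ A, B x) ≤ ν :=
    (mk_biUnion_le _ _).trans (mul_le_of_le hν hAν (ciSup_le' fun x => (hBμ x).trans hμν))
  refine mk_le_of_mk_closure_image_isOpen_le hν hνκ
    (mk_closure_image_isOpen_le hν hνκ (isPiBase_biUnion_of_dense hB hA) mk_pool hcell')
    fun x => ?_
  obtain ⟨𝒱, h𝒱, h𝒱κ, h𝒱x⟩ := exists_weakClosedPseudobase_mk_le_wPsiC x
  exact ⟨𝒱, h𝒱, h𝒱κ.trans hwκ, h𝒱x⟩
end

section
/- If X is a Hausdorff space, then nq(X) ≤ L(X). -/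
open Cardinal Set TopologicalSpace

universe u

/-! Given `x ∈ U`, for each `y ∉ U` separate `x` and `y` by disjoint open sets `V y ∋ x` and
`W y ∋ y`, so that `closure (V y)` misses `W y`; for `y ∈ U` take `V y = X` and `W y = U`.
The sets `W y` cover `X`, and the `V y` indexed by a subcover of size at most `L(X)` form the
required family. -/

section LindelofDegree

variable {X : Type u} [TopologicalSpace X]

theorem lindelofDegree_mem : lindelofDegree X ∈ {κ : Cardinal.{u} | ℵ₀ ≤ κ ∧ ∀ 𝒰 : Set (Set X),
    (∀ U ∈ 𝒰, IsOpen U) → ⋃₀ 𝒰 = Set.univ → ∃ 𝒱 ⊆ 𝒰, #𝒱 ≤ κ ∧ ⋃₀ 𝒱 = Set.univ} :=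
  csInf_mem ⟨max ℵ₀ #(Set X), le_max_left _ _,
    fun 𝒰 _ h𝒰 => ⟨𝒰, subset_rfl, (mk_set_le 𝒰).trans (le_max_right _ _), h𝒰⟩⟩

theorem exists_subcover_card_le_lindelofDegree {ι : Type u} {W : ι → Set X}
    (hW : ∀ i, IsOpen (W i)) (hcov : ⋃ i, W i = Set.univ) :
    ∃ S : Set ι, #S ≤ lindelofDegree X ∧ ⋃ i ∈ S, W i = Set.univ := by
  obtain ⟨𝒱, h𝒱W, h𝒱card, h𝒱cov⟩ :=
    lindelofDegree_mem.2 (range W) (forall_mem_range.2 hW) (by rwa [sUnion_range])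
  obtain ⟨S, rfl, hinj⟩ := exists_image_eq_injOn_of_subset_range h𝒱W
  exact ⟨S, mk_image_eq_of_injOn W S hinj ▸ h𝒱card, by rwa [sUnion_image] at h𝒱cov⟩

end LindelofDegree

theorem exists_isOpen_pair_closure_inter_subset {X : Type u} [TopologicalSpace X] [T2Space X]
    {U : Set X} {x : X} (hU : IsOpen U) (hx : x ∈ U) (y : X) :
    ∃ V W : Set X, IsOpen V ∧ IsOpen W ∧ x ∈ V ∧ y ∈ W ∧ closure V ∩ W ⊆ U := by
  by_cases hy : y ∈ U
  · exact ⟨Set.univ, U, isOpen_univ, hU, mem_univ x, hy, inter_subset_right⟩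
  · obtain ⟨V, W, hV, hW, hxV, hyW, hVW⟩ := t2_separation (ne_of_mem_of_not_mem hx hy)
    refine ⟨V, W, hV, hW, hxV, hyW, ?_⟩
    rw [(hVW.closure_left hW).inter_eq]
    exact empty_subset U

theorem exists_isOpen_family_card_le_lindelofDegree {X : Type u} [TopologicalSpace X]
    [T2Space X] {U : Set X} {x : X} (hU : IsOpen U) (hx : x ∈ U) :
    ∃ 𝒱 : Set (Set X), (∀ V ∈ 𝒱, IsOpen V) ∧ #𝒱 ≤ lindelofDegree X ∧
      x ∈ ⋂₀ 𝒱 ∧ (⋂ V ∈ 𝒱, closure V) ⊆ U := by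
  choose V W hV hW hxV hyW hVW using exists_isOpen_pair_closure_inter_subset hU hx
  obtain ⟨S, hScard, hScov⟩ :=
    exists_subcover_card_le_lindelofDegree hW (iUnion_eq_univ_iff.2 fun y => ⟨y, hyW y⟩)
  refine ⟨V '' S, forall_mem_image.2 fun y _ => hV y, mk_image_le.trans hScard,
    mem_sInter.2 (forall_mem_image.2 fun y _ => hxV y), fun z hz => ?_⟩
  obtain ⟨y, hyS, hzW⟩ := mem_iUnion₂.1 (hScov ▸ mem_univ z)
  exact hVW y ⟨mem_iInter₂.1 hz (V y) (mem_image_of_mem V hyS), hzW⟩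

/-- If `X` is Hausdorff then `nq(X) ≤ L(X)`. -/
theorem stmt_17 (X : Type u) [TopologicalSpace X] [T2Space X] :
    nq X ≤ lindelofDegree X :=
  csInf_le' ⟨lindelofDegree_mem.1, fun _ hU ⟨x, hx⟩ =>
    let ⟨𝒱, h𝒱, hcard, hx𝒱, hcl⟩ := exists_isOpen_family_card_le_lindelofDegree hU hx
    ⟨𝒱, h𝒱, hcard, ⟨x, hx𝒱⟩, hcl⟩⟩
end
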